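/- arXiv:math/0311340 — 3 statements merged into one kernel-verified Lean document; each statement's English description precedes it below -/
import Mathlib

section
/- If B₁, ..., B_r are finite-dimensional connected evenly graded commutative K-algebras with Der^{<0}(B_j) = 0 for all j, then Der^{<0}(B₁ ⊗ ⋯ ⊗ B_r) = 0. -/
open scoped TensorProduct

/-- `θ` is a derivation of the algebra `B`. -/
def IsDeriv {K B : Type*} [CommSemiring K] [CommRing B] [Algebra K B]
    (θ : B →ₗ[K] B) : Prop :=
  ∀ a b : B, θ (a * b) = θ a * b + a * θ b

/-- `θ` is homogeneous of degree `p` with respect to the grading `𝒜`. -/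
def HasDegree {K B : Type*} [CommSemiring K] [CommRing B] [Algebra K B]
    (𝒜 : ℕ → Submodule K B) (θ : B →ₗ[K] B) (p : ℤ) : Prop :=
  ∀ (q : ℕ), ∀ x ∈ 𝒜 q,
    θ x ∈ ⨆ (q' : ℕ) (_ : (q' : ℤ) = (q : ℤ) + p), 𝒜 q'

/-- `Der^{<0}(B) = 0`: every homogeneous derivation of negative degree vanishes. -/
def NegDerVanish {K B : Type*} [CommSemiring K] [CommRing B] [Algebra K B]
    (𝒜 : ℕ → Submodule K B) : Prop :=
  ∀ (θ : B →ₗ[K] B) (p : ℤ), p < 0 → IsDeriv θ → HasDegree 𝒜 θ p → θ = 0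

/-- The natural grading on the `r`-fold tensor product `⨂_j B j`. -/
noncomputable def piTensorGrading {K : Type*} [Field K] {r : ℕ}
    {B : Fin r → Type*} [∀ j, CommRing (B j)] [∀ j, Algebra K (B j)]
    (𝒜 : ∀ j, ℕ → Submodule K (B j)) : ℕ → Submodule K (⨂[K] j, B j) :=
  fun n => ⨆ (d : Fin r → ℕ) (_ : ∑ j, d j = n),
    LinearMap.range (PiTensorProduct.map fun j => ((𝒜 j) (d j)).subtype)


/-!
Let `θ` be a derivation of `⨂ B_i` of degree `p < 0`. Since `⨂ B_i` is generated as an algebra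
by the factors, it suffices that `θ` vanishes on each `B_j`. Contract every factor except the
`j`-th against linear forms `f_i` concentrated in degrees `m_i`; the contraction is `B_j`-linear,
so it turns `θ|_{B_j}` into a derivation of `B_j` of degree `p - ∑_{i ≠ j} m_i < 0`, which vanishes
by hypothesis. Coordinate forms of bases adapted to the gradings are such `f_i`, and they
separate the points of `⨂ B_i`.
-/

open PiTensorProduct

section PiTensorProduct

variable {K : Type*} [CommSemiring K] {ι : Type*} [Fintype ι] [DecidableEq ι]
  {B : ι → Type*} [∀ i, CommSemiring (B i)] [∀ i, Algebra K (B i)]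

lemma PiTensorProduct.adjoin_iUnion_range_singleAlgHom :
    Algebra.adjoin K (⋃ i, Set.range (singleAlgHom (R := K) (A := B) i)) = ⊤ := by
  refine eq_top_iff.mpr fun t _ => ?_
  have hspan : Submodule.span K (Set.range (tprod K)) ≤
      Subalgebra.toSubmodule (Algebra.adjoin K (⋃ i, Set.range (singleAlgHom (A := B) i))) := by
    refine Submodule.span_le.mpr ?_
    rintro _ ⟨x, rfl⟩
    rw [← Finset.univ_prod_mulSingle x, tprod_prod]
    exact Subalgebra.prod_mem _ fun i _ =>
      Algebra.subset_adjoin (Set.mem_iUnion_of_mem i ⟨x i, rfl⟩)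
  exact hspan (span_tprod_eq_top (R := K) (s := B) ▸ Submodule.mem_top)

noncomputable def contractExcept (f : ∀ i, B i →ₗ[K] K) (j : ι) : (⨂[K] i, B i) →ₗ[K] B j :=
  lift <| (MultilinearMap.mkPiAlgebra K ι (B j)).compLinearMap <|
    Function.update (fun i => Algebra.linearMap K (B j) ∘ₗ f i) j LinearMap.id

lemma contractExcept_tprod (f : ∀ i, B i →ₗ[K] K) (j : ι) (x : ∀ i, B i) :
    contractExcept f j (tprod K x) = (∏ i ∈ Finset.univ.erase j, f i (x i)) • x j := by
  rw [contractExcept, lift.tprod, MultilinearMap.compLinearMap_apply,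
    MultilinearMap.mkPiAlgebra_apply, ← Finset.mul_prod_erase _ _ (Finset.mem_univ j),
    Function.update_self, Finset.prod_congr rfl fun i hi => by
      rw [Function.update_of_ne (Finset.ne_of_mem_erase hi)], Algebra.smul_def, mul_comm]
  simp [map_prod]

lemma contractExcept_mul_singleAlgHom (f : ∀ i, B i →ₗ[K] K) (j : ι) (t : ⨂[K] i, B i)
    (b : B j) : contractExcept f j (t * singleAlgHom j b) = contractExcept f j t * b := by
  induction t using PiTensorProduct.induction_on with
  | smul_tprod c x =>
    have hx : x * Pi.mulSingle j b = Function.update x j (x j * b) := by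
      ext i
      rcases eq_or_ne i j with rfl | h
      · simp
      · simp [Function.update_of_ne h, Pi.mulSingle_eq_of_ne h]
    simp only [singleAlgHom_apply, MonoidHom.mulSingle_apply, smul_mul_assoc, tprod_mul_tprod, hx,
      map_smul, contractExcept_tprod, Function.update_self]
    congr 2
    exact Finset.prod_congr rfl fun i hi => by
      rw [Function.update_of_ne (Finset.ne_of_mem_erase hi)]
  | add u v hu hv => simp only [add_mul, map_add, hu, hv]

lemma Basis.piTensorProduct_repr_eq_coord_contractExcept {κ : ι → Type*}
    (b : ∀ i, Module.Basis (κ i) K (B i)) (k : ∀ i, κ i) (j : ι) (t : ⨂[K] i, B i) :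
    (Basis.piTensorProduct b).repr t k =
      (b j).coord (k j) (contractExcept (fun i => (b i).coord (k i)) j t) := by
  induction t using PiTensorProduct.induction_on with
  | smul_tprod c x =>
    simp only [map_smul, Finsupp.smul_apply, Basis.piTensorProduct_repr_tprod_apply,
      contractExcept_tprod, Module.Basis.coord_apply, smul_eq_mul]
    rw [← Finset.prod_erase_mul _ _ (Finset.mem_univ j)]
  | add u v hu hv => rw [map_add, Finsupp.add_apply, hu, hv, map_add, map_add]

end PiTensorProduct

section Derivations

variable {K : Type*} [CommRing K]

lemma IsDeriv.eq_zero_of_forall_singleAlgHom {ι : Type*} [Fintype ι] [DecidableEq ι]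
    {B : ι → Type*} [∀ i, CommRing (B i)] [∀ i, Algebra K (B i)]
    {θ : (⨂[K] i, B i) →ₗ[K] ⨂[K] i, B i} (hθ : IsDeriv θ)
    (h : ∀ i b, θ (singleAlgHom i b) = 0) : θ = 0 := by
  let D : Derivation K (⨂[K] i, B i) (⨂[K] i, B i) :=
    Derivation.mk' θ fun a b => by rw [hθ, smul_eq_mul, smul_eq_mul, mul_comm (θ a), add_comm]
  have hD : D = 0 := Derivation.ext_of_adjoin_eq_top _ adjoin_iUnion_range_singleAlgHom <| by
    simp only [Set.EqOn, Set.mem_iUnion, Set.mem_range, forall_exists_index]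
    rintro _ i b rfl
    exact h i b
  exact congrArg Derivation.toLinearMap hD

lemma IsDeriv.comp_algHom_of_map_mul {A T : Type*} [CommRing A] [CommRing T] [Algebra K A]
    [Algebra K T] {θ : T →ₗ[K] T} (hθ : IsDeriv θ) (ι : A →ₐ[K] T) (π : T →ₗ[K] A)
    (hπ : ∀ t a, π (t * ι a) = π t * a) : IsDeriv (π ∘ₗ θ ∘ₗ ι.toLinearMap) := by
  intro a b
  simp only [LinearMap.comp_apply, AlgHom.toLinearMap_apply]
  rw [map_mul, hθ, map_add, hπ, mul_comm (ι a), hπ, mul_comm a]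

end Derivations

section Degree

variable {K V W U : Type*} [CommSemiring K] [AddCommMonoid V] [Module K V] [AddCommMonoid W]
  [Module K W] [AddCommMonoid U] [Module K U]

/-- `HasDegree 𝒜 θ p` is `MapsDegree 𝒜 𝒜 θ p` by definition. -/
def MapsDegree (𝒜 : ℕ → Submodule K V) (ℬ : ℕ → Submodule K W) (φ : V →ₗ[K] W) (p : ℤ) :
    Prop :=
  ∀ q : ℕ, ∀ x ∈ 𝒜 q, φ x ∈ ⨆ (q' : ℕ) (_ : (q' : ℤ) = q + p), ℬ q'

lemma MapsDegree.comp {𝒜 : ℕ → Submodule K V} {ℬ : ℕ → Submodule K W} {𝒞 : ℕ → Submodule K U}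
    {ψ : W →ₗ[K] U} {φ : V →ₗ[K] W} {p p' : ℤ} (hψ : MapsDegree ℬ 𝒞 ψ p')
    (hφ : MapsDegree 𝒜 ℬ φ p) : MapsDegree 𝒜 𝒞 (ψ ∘ₗ φ) (p + p') := by
  intro q x hx
  suffices h : (⨆ (q' : ℕ) (_ : (q' : ℤ) = q + p), ℬ q') ≤
      (⨆ (q'' : ℕ) (_ : (q'' : ℤ) = q + (p + p')), 𝒞 q'').comap ψ from h (hφ q x hx)
  refine iSup₂_le fun q' hq' y hy => ?_
  rw [Submodule.mem_comap, ← add_assoc, ← hq']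
  exact hψ q' y hy

end Degree

lemma eq_zero_of_forall_contractExcept {K : Type*} [Field K] {ι : Type*} [Fintype ι]
    [DecidableEq ι] {B : ι → Type*} [∀ i, CommRing (B i)] [∀ i, Algebra K (B i)]
    (𝒜 : ∀ i, ℕ → Submodule K (B i)) [∀ i, DirectSum.Decomposition (𝒜 i)] (j : ι)
    {t : ⨂[K] i, B i}
    (h : ∀ (m : ι → ℕ) (f : ∀ i, B i →ₗ[K] K), (∀ i, ∀ e ≠ m i, ∀ x ∈ 𝒜 i e, f i x = 0) →
      contractExcept f j t = 0) : t = 0 := by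
  let b i := (DirectSum.Decomposition.isInternal (𝒜 i)).collectedBasis
    fun e => Module.Basis.ofVectorSpace K (𝒜 i e)
  refine (Basis.piTensorProduct b).repr.map_eq_zero_iff.mp (Finsupp.ext fun k => ?_)
  rw [Basis.piTensorProduct_repr_eq_coord_contractExcept b k j, h (fun i => (k i).1), map_zero,
    Finsupp.zero_apply]
  intro i e he x hx
  exact DirectSum.IsInternal.collectedBasis_repr_of_mem_ne _ _ he hx

section Graded

variable {K : Type*} [Field K] {r : ℕ} {B : Fin r → Type*} [∀ i, CommRing (B i)]
  [∀ i, Algebra K (B i)] (𝒜 : ∀ i, ℕ → Submodule K (B i))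

lemma mapsDegree_singleAlgHom [∀ i, SetLike.GradedOne (𝒜 i)] (j : Fin r) :
    MapsDegree (𝒜 j) (piTensorGrading 𝒜) (singleAlgHom j).toLinearMap 0 := by
  intro q b hb
  refine Submodule.mem_iSup_of_mem q (Submodule.mem_iSup_of_mem (add_zero _).symm ?_)
  refine Submodule.mem_iSup_of_mem (Pi.single j q) (Submodule.mem_iSup_of_mem (by simp) ?_)
  refine ⟨tprod K fun i => ⟨Pi.mulSingle j b i, ?_⟩, ?_⟩
  · rcases eq_or_ne i j with rfl | h
    · simpa using hb
    · simpa [h] using SetLike.one_mem_graded (𝒜 i)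
  · rw [map_tprod]
    rfl

lemma mapsDegree_contractExcept (f : ∀ i, B i →ₗ[K] K) (j : Fin r) (m : Fin r → ℕ)
    (hf : ∀ i ≠ j, ∀ e ≠ m i, ∀ x ∈ 𝒜 i e, f i x = 0) :
    MapsDegree (piTensorGrading 𝒜) (𝒜 j) (contractExcept f j)
      (-((∑ i ∈ Finset.univ.erase j, m i : ℕ) : ℤ)) := by
  intro n t ht
  rw [← Submodule.mem_comap]
  refine (iSup₂_le fun d hd => ?_ : piTensorGrading 𝒜 n ≤ _) ht
  rintro _ ⟨u, rfl⟩
  induction u using PiTensorProduct.induction_on with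
  | smul_tprod c y =>
    rw [Submodule.mem_comap, map_smul, map_tprod, map_smul, contractExcept_tprod]
    refine Submodule.smul_mem _ _ ?_
    by_cases hdm : ∀ i ∈ Finset.univ.erase j, d i = m i
    · refine Submodule.smul_mem _ _
        (Submodule.mem_iSup_of_mem (d j) (Submodule.mem_iSup_of_mem ?_ (y j).2))
      have hsplit : d j + ∑ i ∈ Finset.univ.erase j, m i = n := by
        rw [← Finset.sum_congr rfl hdm, Finset.add_sum_erase _ _ (Finset.mem_univ j), hd]
      omega
    · obtain ⟨i, hi, hne⟩ := not_forall₂.mp hdm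
      rw [Finset.prod_eq_zero hi (hf i (Finset.ne_of_mem_erase hi) _ hne _ (y i).2), zero_smul]
      exact zero_mem _
  | add u v hu hv =>
    rw [map_add]
    exact add_mem hu hv

end Graded

theorem stmt_4_general {K : Type*} [Field K] {r : ℕ}
    {B : Fin r → Type*} [∀ j, CommRing (B j)] [∀ j, Algebra K (B j)]
    (𝒜 : ∀ j, ℕ → Submodule K (B j)) [∀ j, GradedAlgebra (𝒜 j)]
    (hneg : ∀ j, NegDerVanish (𝒜 j)) :
    NegDerVanish (piTensorGrading 𝒜) := by
  intro θ p hp hθ hdeg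
  refine hθ.eq_zero_of_forall_singleAlgHom fun j b => ?_
  refine eq_zero_of_forall_contractExcept 𝒜 j fun m f hf => ?_
  have hD := hneg j (contractExcept f j ∘ₗ θ ∘ₗ (singleAlgHom j).toLinearMap) _ (by omega)
    (hθ.comp_algHom_of_map_mul _ _ (contractExcept_mul_singleAlgHom f j))
    ((mapsDegree_contractExcept 𝒜 f j m fun i _ => hf i).comp
      ((show MapsDegree _ _ θ p from hdeg).comp (mapsDegree_singleAlgHom 𝒜 j)))
  exact LinearMap.congr_fun hD b

/-- If `B₁, …, B_r` are finite-dimensional connected evenly graded commutative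
`K`-algebras with `Der^{<0}(B_j) = 0` for all `j`, then
`Der^{<0}(B₁ ⊗ ⋯ ⊗ B_r) = 0`. -/
theorem stmt_4 {K : Type*} [Field K] {r : ℕ}
    {B : Fin r → Type*} [∀ j, CommRing (B j)] [∀ j, Algebra K (B j)]
    (𝒜 : ∀ j, ℕ → Submodule K (B j)) [∀ j, GradedAlgebra (𝒜 j)]
    (hconn : ∀ j, (𝒜 j) 0 = (1 : Submodule K (B j)))
    (heven : ∀ j n, Odd n → (𝒜 j) n = ⊥)
    [∀ j, FiniteDimensional K (B j)]
    (hneg : ∀ j, NegDerVanish (𝒜 j)) :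
    NegDerVanish (piTensorGrading 𝒜) :=
  stmt_4_general 𝒜 hneg
end

section
/- The sequence f₁ = x₁^{a₁} - x₂^{a₂}, ..., f_{n-1} = x_{n-1}^{a_{n-1}} - x_n^{a_n}, f_n = x_n^{2k·a_n} is a regular sequence in ℚ[x₁,...,x_n], i.e., the quotient ℚ[x₁,...,x_n]/(f₁,...,f_n) is a finite-dimensional ℚ-vector space (an Artinian complete intersection). -/
open MvPolynomial

/-- The sequence `f₁ = x₁^{a₁} - x₂^{a₂}, …, f_{n-1} = x_{n-1}^{a_{n-1}} - x_n^{a_n}`,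
`f_n = x_n^{2k·a_n}` is a regular sequence in `ℚ[x₁,…,x_n]`, i.e., the quotient
`ℚ[x₁,…,x_n]/(f₁,…,f_n)` is a finite-dimensional `ℚ`-vector space. -/
theorem stmt_8 (n k : ℕ) (hn : 2 ≤ n) (hk : 1 ≤ k)
    (a : Fin n → ℕ) (ha : ∀ i, 2 ≤ a i)
    (f : Fin n → MvPolynomial (Fin n) ℚ)
    (hf : ∀ i : Fin n, f i =
      if h : (i : ℕ) + 1 < n then
        X i ^ a i - X (⟨(i : ℕ) + 1, h⟩ : Fin n) ^ a (⟨(i : ℕ) + 1, h⟩ : Fin n)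
      else
        X i ^ (2 * k * a i)) :
    FiniteDimensional ℚ (MvPolynomial (Fin n) ℚ ⧸ Ideal.span (Set.range f)) := by
  set I : Ideal (MvPolynomial (Fin n) ℚ) := Ideal.span (Set.range f) with hI
  set π : MvPolynomial (Fin n) ℚ →ₐ[ℚ] MvPolynomial (Fin n) ℚ ⧸ I :=
    Ideal.Quotient.mkₐ ℚ I with hπ
  -- each variable's image is nilpotent
  have key : ∀ d : ℕ, ∀ i : Fin n, (i : ℕ) + d + 1 = n →
      ∃ N : ℕ, 0 < N ∧ (π (X i)) ^ N = 0 := by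
    intro d
    induction d with
    | zero =>
      intro i hi
      have hlt : ¬ ((i : ℕ) + 1 < n) := by omega
      have hfi : f i = X i ^ (2 * k * a i) := by rw [hf i, dif_neg hlt]
      refine ⟨2 * k * a i, by have := ha i; positivity, ?_⟩
      rw [← map_pow, ← hfi]
      exact (Ideal.Quotient.eq_zero_iff_mem).2 (Ideal.subset_span ⟨i, rfl⟩)
    | succ d ih =>
      intro i hi
      have h : (i : ℕ) + 1 < n := by omega
      set j : Fin n := ⟨(i : ℕ) + 1, h⟩ with hj
      obtain ⟨N, hNpos, hN⟩ := ih j (by simp [hj]; omega)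
      have hfi : f i = X i ^ a i - X j ^ a j := by rw [hf i, dif_pos h]
      have hzero : π (f i) = 0 :=
        (Ideal.Quotient.eq_zero_iff_mem).2 (Ideal.subset_span ⟨i, rfl⟩)
      have heq : (π (X i)) ^ a i = (π (X j)) ^ a j := by
        have := hzero
        rw [hfi, map_sub, map_pow, map_pow, sub_eq_zero] at this
        exact this
      refine ⟨a i * N, by have := ha i; positivity, ?_⟩
      calc (π (X i)) ^ (a i * N) = ((π (X i)) ^ a i) ^ N := by rw [pow_mul]
        _ = ((π (X j)) ^ N) ^ a j := by rw [heq, ← pow_mul, mul_comm, pow_mul]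
        _ = 0 := by rw [hN, zero_pow (by have := ha j; omega)]
  have nilp : ∀ i : Fin n, IsIntegral ℚ (π (X i)) := by
    intro i
    obtain ⟨N, hNpos, hN⟩ := key (n - 1 - (i : ℕ)) i (by omega)
    refine ⟨Polynomial.X ^ N, Polynomial.monic_X_pow N, ?_⟩
    simp [Polynomial.eval₂_X_pow, hN]
  -- the quotient is generated as an algebra by images of the variables
  have hadj : Algebra.adjoin ℚ (Set.range fun i : Fin n => π (X i)) = ⊤ := by
    have : Set.range (fun i : Fin n => π (X i)) = π '' (Set.range X) := by
      ext x; simp [Set.range_comp]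
    rw [this, Algebra.adjoin_image, MvPolynomial.adjoin_range_X, Algebra.map_top]
    exact (AlgHom.range_eq_top π).2 (Ideal.Quotient.mkₐ_surjective ℚ I)
  have hfg : (Algebra.adjoin ℚ (Set.range fun i : Fin n => π (X i))).toSubmodule.FG := by
    apply fg_adjoin_of_finite (Set.finite_range _)
    rintro x ⟨i, rfl⟩
    exact nilp i
  rw [hadj] at hfg
  rw [Algebra.top_toSubmodule] at hfg
  exact ⟨hfg⟩
end

section
/- Let A = ℚ[x₁,...,x_n]/(f₁,...,f_n) as above, identified with B ⊗ F where B = ℚ[y₀]/(y₀^{2k}) and F = ⊗ᵢ ℚ[x_i]/(x_i^{a_i}). Let N = V ⊗ F where V = span{y₀^s : 0 ≤ s < k}. Then dim_ℚ A = 2·dim_ℚ N, and N·N = 0 under the Poincaré duality inner product (equivalently, the product of any two elements of N has zero component in the top degree of A). -/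
/-!
In `A` every `x_i ^ a_i` equals `y = x_n ^ a_n` (follow the chain of relations), and `y ^ (2k) = 0`.
Hence `A` is spanned by the classes of the monomials `y ^ s * x ^ c` with `s < 2k`, `c_i < a_i`.
They are linearly independent because the linear map on polynomials sending `x ^ α` to
`y ^ q * x ^ (α mod a)`, `q = Σ ⌊α_i / a_i⌋`, or to `0` when `q ≥ 2k`, kills the ideal and fixes
them. So `dim A = 2k ∏ a_i = 2 dim N`.

As `w_i a_i = d`, the standard monomial `y ^ q * x ^ r` has weight `q d + Σ r_i w_i`, which equals
the top degree only for `q = 2k - 1`, `r_i = a_i - 1`. A product of two generators of `N` is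
`y ^ s * x ^ c` with `s ≤ 2k - 2` and `c_i ≤ 2 a_i - 2`; its residues `c_i mod a_i` can all be
`a_i - 1` only when `c_i < a_i`, and then its `y`-degree is `s < 2k - 1`. So the product is zero in
`A` or has weight different from the top degree.
-/

open MvPolynomial

namespace WeightedCI

noncomputable def relation {n : ℕ} (k : ℕ) (a : Fin n → ℕ) (i : Fin n) :
    MvPolynomial (Fin n) ℚ :=
  if h : (i : ℕ) + 1 < n then
    X i ^ a i - X (⟨(i : ℕ) + 1, h⟩ : Fin n) ^ a (⟨(i : ℕ) + 1, h⟩ : Fin n)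
  else
    X i ^ (2 * k * a i)

noncomputable abbrev ideal {n : ℕ} (k : ℕ) (a : Fin n → ℕ) : Ideal (MvPolynomial (Fin n) ℚ) :=
  Ideal.span (Set.range (relation k a))

/-- The exponent of `y = x_n ^ a_n` in the class of `x ^ c` in `A`. -/
def yDegree {n : ℕ} (a c : Fin n → ℕ) : ℕ := ∑ i, c i / a i

/-- `y ^ s * x ^ c` with `y = x_n ^ a_n`, i.e. `y₀ ^ s ⊗ x ^ c` in `B ⊗ F`. -/
noncomputable def stdMonomial {m : ℕ} (a : Fin (m + 1) → ℕ) (s : ℕ) (c : Fin (m + 1) → ℕ) :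
    MvPolynomial (Fin (m + 1)) ℚ :=
  X (Fin.last m) ^ (s * a (Fin.last m)) * ∏ i, X i ^ c i

section yDegree

variable {n : ℕ} {a : Fin n → ℕ}

lemma yDegree_mod_eq_zero (c : Fin n → ℕ) : yDegree a (fun i => c i % a i) = 0 :=
  Finset.sum_eq_zero fun i _ => Nat.mod_div_self (c i) (a i)

lemma yDegree_eq_zero_of_lt {c : Fin n → ℕ} (hc : ∀ i, c i < a i) : yDegree a c = 0 :=
  Finset.sum_eq_zero fun i _ => Nat.div_eq_of_lt (hc i)

lemma yDegree_add_single {j : Fin n} (hj : 0 < a j) (α : Fin n →₀ ℕ) (t : ℕ) :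
    yDegree a ⇑(α + Finsupp.single j (t * a j)) = yDegree a α + t := by
  rw [yDegree, yDegree, ← Finset.add_sum_erase _ _ (Finset.mem_univ j),
    ← Finset.add_sum_erase _ _ (Finset.mem_univ j), Finset.sum_congr rfl fun i hi => by
      rw [Finsupp.add_apply, Finsupp.single_eq_of_ne (Finset.ne_of_mem_erase hi), add_zero]]
  simp only [Finsupp.add_apply, Finsupp.single_eq_same, Nat.add_mul_div_right _ _ hj]
  ring

lemma add_single_mod (α : Fin n →₀ ℕ) (j : Fin n) (t : ℕ) (i : Fin n) :
    (α + Finsupp.single j (t * a j)) i % a i = α i % a i := by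
  rcases eq_or_ne j i with rfl | hji
  · simp [Nat.add_mul_mod_self_right]
  · rw [Finsupp.add_apply, Finsupp.single_eq_of_ne hji.symm, add_zero]

lemma sum_mul_weight_eq {d : ℕ} {w : Fin n → ℕ} (hwd : ∀ i, w i * a i = d) (c : Fin n → ℕ) :
    ∑ i, c i * w i = yDegree a c * d + ∑ i, c i % a i * w i := by
  rw [yDegree, Finset.sum_mul, ← Finset.sum_add_distrib]
  refine Finset.sum_congr rfl fun i _ => ?_
  conv_lhs => rw [← Nat.div_add_mod (c i) (a i)]
  rw [← hwd i]
  ring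

end yDegree

section Quotient

variable {m k : ℕ} {a : Fin (m + 1) → ℕ}

lemma relation_castSucc (j : Fin m) :
    relation k a j.castSucc = X j.castSucc ^ a j.castSucc - X j.succ ^ a j.succ :=
  dif_pos (by simp)

lemma relation_last : relation k a (Fin.last m) = X (Fin.last m) ^ (2 * k * a (Fin.last m)) := by
  simp [relation]

lemma mk_relation (i : Fin (m + 1)) : Ideal.Quotient.mk (ideal k a) (relation k a i) = 0 :=
  Ideal.Quotient.eq_zero_iff_mem.2 (Ideal.subset_span (Set.mem_range_self i))

lemma mk_X_pow_eq_last (i : Fin (m + 1)) :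
    Ideal.Quotient.mk (ideal k a) (X i ^ a i) =
      Ideal.Quotient.mk (ideal k a) (X (Fin.last m) ^ a (Fin.last m)) := by
  induction i using Fin.reverseInduction with
  | last => rfl
  | cast j ih =>
    rw [← ih, ← sub_eq_zero, ← map_sub, ← relation_castSucc, mk_relation]

lemma mk_X_last_pow_eq_zero :
    Ideal.Quotient.mk (ideal k a) (X (Fin.last m) ^ a (Fin.last m)) ^ (2 * k) = 0 := by
  rw [← map_pow, ← pow_mul, mul_comm, ← relation_last, mk_relation]

lemma mk_stdMonomial (s : ℕ) (c : Fin (m + 1) → ℕ) :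
    Ideal.Quotient.mk (ideal k a) (stdMonomial a s c) =
      Ideal.Quotient.mk (ideal k a) (X (Fin.last m) ^ a (Fin.last m)) ^ (s + yDegree a c) *
        ∏ i, Ideal.Quotient.mk (ideal k a) (X i) ^ (c i % a i) := by
  have hX : ∀ i, Ideal.Quotient.mk (ideal k a) (X i) ^ c i =
      Ideal.Quotient.mk (ideal k a) (X (Fin.last m) ^ a (Fin.last m)) ^ (c i / a i) *
        Ideal.Quotient.mk (ideal k a) (X i) ^ (c i % a i) := fun i => by
    conv_lhs => rw [← Nat.div_add_mod (c i) (a i)]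
    rw [pow_add, pow_mul, ← map_pow, mk_X_pow_eq_last]
  simp only [stdMonomial, map_mul, map_prod, map_pow, hX, Finset.prod_mul_distrib,
    Finset.prod_pow_eq_pow_sum, yDegree]
  ring

lemma mk_stdMonomial_eq_ite (s : ℕ) (c : Fin (m + 1) → ℕ) :
    Ideal.Quotient.mk (ideal k a) (stdMonomial a s c) =
      if s + yDegree a c < 2 * k then
        Ideal.Quotient.mk (ideal k a) (stdMonomial a (s + yDegree a c) fun i => c i % a i)
      else 0 := by
  split_ifs with h
  · simp only [mk_stdMonomial, yDegree_mod_eq_zero, add_zero, Nat.mod_mod]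
  · rw [mk_stdMonomial, ← Nat.add_sub_of_le (not_lt.1 h), pow_add, mk_X_last_pow_eq_zero,
      zero_mul, zero_mul]

end Quotient

section NormalForm

variable {m : ℕ} (k : ℕ) (a : Fin (m + 1) → ℕ)

noncomputable def normalForm : MvPolynomial (Fin (m + 1)) ℚ →ₗ[ℚ] MvPolynomial (Fin (m + 1)) ℚ :=
  (basisMonomials (Fin (m + 1)) ℚ).constr ℚ fun α =>
    if yDegree a α < 2 * k then stdMonomial a (yDegree a α) (fun i => α i % a i) else 0

noncomputable def stdExponent (s : ℕ) (c : Fin (m + 1) → ℕ) : Fin (m + 1) →₀ ℕ :=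
  Finsupp.equivFunOnFinite.symm c + Finsupp.single (Fin.last m) (s * a (Fin.last m))

variable {k a}

lemma normalForm_monomial (α : Fin (m + 1) →₀ ℕ) :
    normalForm k a (monomial α 1) =
      if yDegree a α < 2 * k then stdMonomial a (yDegree a α) (fun i => α i % a i) else 0 :=
  (basisMonomials _ ℚ).constr_basis ℚ _ α

lemma normalForm_monomial_add_single {j : Fin (m + 1)} (hj : 0 < a j) (α : Fin (m + 1) →₀ ℕ)
    (t : ℕ) :
    normalForm k a (monomial (α + Finsupp.single j (t * a j)) 1) =
      if yDegree a α + t < 2 * k then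
        stdMonomial a (yDegree a α + t) (fun i => α i % a i) else 0 := by
  simp only [normalForm_monomial, yDegree_add_single hj, add_single_mod]

lemma normalForm_mul_relation (ha : ∀ i, 0 < a i) (i : Fin (m + 1))
    (p : MvPolynomial (Fin (m + 1)) ℚ) : normalForm k a (p * relation k a i) = 0 := by
  suffices normalForm k a ∘ₗ LinearMap.mulRight ℚ (relation k a i) = 0 from
    LinearMap.congr_fun this p
  refine (basisMonomials _ ℚ).ext fun α => ?_
  rw [coe_basisMonomials, LinearMap.comp_apply, LinearMap.mulRight_apply, LinearMap.zero_apply]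
  induction i using Fin.reverseInduction with
  | last =>
    rw [relation_last, X_pow_eq_monomial, monomial_mul, one_mul,
      normalForm_monomial_add_single (ha _), if_neg (by omega)]
  | cast j _ =>
    rw [relation_castSucc, mul_sub, X_pow_eq_monomial, X_pow_eq_monomial, monomial_mul,
      monomial_mul, one_mul, map_sub, ← one_mul (a j.castSucc), ← one_mul (a j.succ),
      normalForm_monomial_add_single (ha _), normalForm_monomial_add_single (ha _), sub_self]

lemma normalForm_eq_zero_of_mem (ha : ∀ i, 0 < a i) {p : MvPolynomial (Fin (m + 1)) ℚ}
    (hp : p ∈ ideal k a) : normalForm k a p = 0 := by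
  obtain ⟨c, rfl⟩ := Ideal.mem_span_range_iff_exists_fun.1 hp
  simp only [map_sum, normalForm_mul_relation ha, Finset.sum_const_zero]

lemma stdMonomial_eq_monomial (s : ℕ) (c : Fin (m + 1) → ℕ) :
    stdMonomial a s c = monomial (stdExponent a s c) 1 := by
  rw [stdExponent, monomial_add_single, mul_comm, stdMonomial, monomial_eq, C_1, one_mul,
    Finsupp.prod_fintype _ _ fun _ => pow_zero _]
  rfl

lemma yDegree_stdExponent (s : ℕ) {c : Fin (m + 1) → ℕ} (hc : ∀ i, c i < a i) :
    yDegree a ⇑(stdExponent a s c) = s := by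
  rw [stdExponent, yDegree_add_single ((Nat.zero_le _).trans_lt (hc _)),
    Finsupp.coe_equivFunOnFinite_symm, yDegree_eq_zero_of_lt hc, zero_add]

lemma stdExponent_mod (s : ℕ) {c : Fin (m + 1) → ℕ} (hc : ∀ i, c i < a i) (i : Fin (m + 1)) :
    stdExponent a s c i % a i = c i := by
  rw [stdExponent, add_single_mod, Finsupp.coe_equivFunOnFinite_symm, Nat.mod_eq_of_lt (hc i)]

lemma normalForm_stdMonomial {s : ℕ} (hs : s < 2 * k) {c : Fin (m + 1) → ℕ}
    (hc : ∀ i, c i < a i) : normalForm k a (stdMonomial a s c) = stdMonomial a s c := by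
  rw [stdMonomial_eq_monomial, normalForm_monomial, yDegree_stdExponent s hc, if_pos hs]
  simp only [stdExponent_mod s hc]
  exact stdMonomial_eq_monomial s c

end NormalForm

section Basis

variable {m k : ℕ} {a : Fin (m + 1) → ℕ}

noncomputable def normalFormQuot (ha : ∀ i, 0 < a i) :
    (MvPolynomial (Fin (m + 1)) ℚ ⧸ ideal k a) →ₗ[ℚ] MvPolynomial (Fin (m + 1)) ℚ :=
  ((ideal k a).restrictScalars ℚ).liftQ (normalForm k a)
      (fun _ hp => normalForm_eq_zero_of_mem ha hp) ∘ₗ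
    (Submodule.Quotient.restrictScalarsEquiv ℚ (ideal k a)).symm.toLinearMap

lemma normalFormQuot_mk (ha : ∀ i, 0 < a i) (p : MvPolynomial (Fin (m + 1)) ℚ) :
    normalFormQuot ha (Ideal.Quotient.mk (ideal k a) p) = normalForm k a p :=
  rfl

variable (k a) in
noncomputable def stdBasis (t : ℕ) (p : Fin t × ∀ i, Fin (a i)) :
    MvPolynomial (Fin (m + 1)) ℚ ⧸ ideal k a :=
  Ideal.Quotient.mk (ideal k a) (stdMonomial a p.1 fun i => p.2 i)

lemma linearIndependent_stdMonomial :
    LinearIndependent ℚ fun p : ℕ × ∀ i, Fin (a i) =>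
      stdMonomial a p.1 fun i => p.2 i := by
  let e (p : ℕ × ∀ i, Fin (a i)) : Fin (m + 1) →₀ ℕ := stdExponent a p.1 fun i => p.2 i
  have he : Function.Injective e := fun p q h => by
    have hs := congrArg (fun α : Fin (m + 1) →₀ ℕ => yDegree a α) h
    have hc := fun i => congrArg (fun α : Fin (m + 1) →₀ ℕ => α i % a i) h
    simp only [e, yDegree_stdExponent _ fun i => (p.2 i).isLt,
      yDegree_stdExponent _ fun i => (q.2 i).isLt] at hs
    simp only [e, stdExponent_mod _ fun i => (p.2 i).isLt,
      stdExponent_mod _ fun i => (q.2 i).isLt] at hc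
    exact Prod.ext hs (funext fun i => Fin.ext (hc i))
  have := (basisMonomials (Fin (m + 1)) ℚ).linearIndependent.comp e he
  rw [coe_basisMonomials] at this
  simpa only [Function.comp_def, e, ← stdMonomial_eq_monomial] using this

lemma linearIndependent_stdBasis (ha : ∀ i, 0 < a i) {t : ℕ} (ht : t ≤ 2 * k) :
    LinearIndependent ℚ (stdBasis k a t) := by
  refine .of_comp (normalFormQuot ha) ?_
  have : normalFormQuot ha ∘ stdBasis k a t = fun p => stdMonomial a p.1 fun i => p.2 i :=
    funext fun p => by
      rw [Function.comp_apply, stdBasis, normalFormQuot_mk]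
      exact normalForm_stdMonomial (p.1.isLt.trans_le ht) fun i => (p.2 i).isLt
  rw [this]
  have hinj : Function.Injective fun p : Fin t × (∀ i, Fin (a i)) => ((p.1 : ℕ), p.2) :=
    fun p q h => by simp_all [Prod.ext_iff, Fin.ext_iff]
  simpa only [Function.comp_def] using (linearIndependent_stdMonomial (a := a)).comp _ hinj

lemma finrank_span_stdBasis (ha : ∀ i, 0 < a i) {t : ℕ} (ht : t ≤ 2 * k) :
    Module.finrank ℚ (Submodule.span ℚ (Set.range (stdBasis k a t))) = t * ∏ i, a i := by
  rw [finrank_span_eq_card (linearIndependent_stdBasis ha ht), Fintype.card_prod,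
    Fintype.card_fin, Fintype.card_pi]
  simp only [Fintype.card_fin]

lemma monomial_one_eq_stdMonomial (α : Fin (m + 1) →₀ ℕ) : monomial α 1 = stdMonomial a 0 α := by
  rw [stdMonomial_eq_monomial, stdExponent, zero_mul, Finsupp.single_zero, add_zero,
    Finsupp.equivFunOnFinite_symm_coe]

lemma span_stdBasis (ha : ∀ i, 0 < a i) :
    Submodule.span ℚ (Set.range (stdBasis k a (2 * k))) = ⊤ := by
  refine eq_top_iff.2 ?_
  rintro x -
  obtain ⟨p, rfl⟩ := Ideal.Quotient.mk_surjective x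
  induction p using MvPolynomial.induction_on' with
  | add p q hp hq => rw [map_add]; exact Submodule.add_mem _ hp hq
  | monomial α c =>
    have hc : monomial α c = c • stdMonomial a 0 α := by
      rw [← monomial_one_eq_stdMonomial, smul_monomial, smul_eq_mul, mul_one]
    rw [hc, ← Ideal.Quotient.mkₐ_eq_mk ℚ, map_smul, Ideal.Quotient.mkₐ_eq_mk,
      mk_stdMonomial_eq_ite, zero_add]
    refine Submodule.smul_mem _ _ ?_
    split_ifs with h
    · exact Submodule.subset_span ⟨(⟨_, h⟩, fun i => ⟨α i % a i, Nat.mod_lt _ (ha i)⟩), rfl⟩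
    · exact Submodule.zero_mem _

lemma finrank_quotient (ha : ∀ i, 0 < a i) :
    Module.finrank ℚ (MvPolynomial (Fin (m + 1)) ℚ ⧸ ideal k a) = 2 * k * ∏ i, a i := by
  rw [← finrank_top, ← span_stdBasis ha, finrank_span_stdBasis ha le_rfl]

end Basis

section TopDegree

variable {m k d : ℕ} {a w : Fin (m + 1) → ℕ}

lemma eq_socle_of_weight_eq (hwd : ∀ i, w i * a i = d) (hw : ∀ i, 0 < w i) {Q : ℕ}
    (hQ : Q < 2 * k) {r : Fin (m + 1) → ℕ} (hr : ∀ i, r i < a i)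
    (h : Q * d + ∑ i, r i * w i = m * d + 2 * k * d - ∑ i, w i) :
    Q + 1 = 2 * k ∧ ∀ i, r i + 1 = a i := by
  have hd : 0 < d := hwd 0 ▸ Nat.mul_pos (hw 0) ((Nat.zero_le _).trans_lt (hr 0))
  have hle : ∀ i, (r i + 1) * w i ≤ a i * w i := fun i => Nat.mul_le_mul_right _ (hr i)
  have hsum : ∑ i, a i * w i = m * d + d := by
    simp only [mul_comm (a _), hwd, Finset.sum_const, Finset.card_univ, Fintype.card_fin,
      smul_eq_mul, add_mul, one_mul]
  have hsplit : ∑ i, (r i + 1) * w i = ∑ i, r i * w i + ∑ i, w i := by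
    simp only [add_mul, one_mul, Finset.sum_add_distrib]
  have hPle : ∑ i, (r i + 1) * w i ≤ m * d + d := hsum ▸ Finset.sum_le_sum fun i _ => hle i
  have hQd : Q * d + d ≤ 2 * k * d := Nat.succ_mul Q d ▸ Nat.mul_le_mul_right d hQ
  have hQeq : Q * d + d = 2 * k * d := by omega
  have hPeq : ∑ i, (r i + 1) * w i = ∑ i, a i * w i := by omega
  refine ⟨Nat.eq_of_mul_eq_mul_right hd (by simpa only [add_mul, one_mul] using hQeq),
    fun i => Nat.eq_of_mul_eq_mul_right (hw i) ?_⟩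
  exact (Finset.sum_eq_sum_iff_of_le fun i _ => hle i).1 hPeq i (Finset.mem_univ i)

lemma isWeightedHomogeneous_stdMonomial (hwd : ∀ i, w i * a i = d) (s : ℕ)
    (c : Fin (m + 1) → ℕ) :
    IsWeightedHomogeneous w (stdMonomial a s c) (s * d + ∑ i, c i * w i) := by
  rw [stdMonomial]
  convert ((isWeightedHomogeneous_X ℚ w (Fin.last m)).pow (s * a (Fin.last m))).mul
    (IsWeightedHomogeneous.prod Finset.univ _ _ fun i _ => (isWeightedHomogeneous_X ℚ w i).pow (c i))
    using 1
  simp only [smul_eq_mul, mul_assoc, mul_comm (a _), hwd]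

lemma stdMonomial_mul (s s' : ℕ) (c c' : Fin (m + 1) → ℕ) :
    stdMonomial a s c * stdMonomial a s' c' = stdMonomial a (s + s') (c + c') := by
  simp only [stdMonomial, Pi.add_apply, pow_add, add_mul, Finset.prod_mul_distrib]
  ring

lemma mk_stdMonomial_eq_zero_of_weight (hwd : ∀ i, w i * a i = d) (hw : ∀ i, 0 < w i)
    (ha : ∀ i, 0 < a i) {s : ℕ} (hs : s + 2 ≤ 2 * k) {c : Fin (m + 1) → ℕ}
    (hc : ∀ i, c i + 2 ≤ 2 * a i)
    (h : s * d + ∑ i, c i * w i = m * d + 2 * k * d - ∑ i, w i) :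
    Ideal.Quotient.mk (ideal k a) (stdMonomial a s c) = 0 := by
  rw [mk_stdMonomial_eq_ite, if_neg]
  intro hlt
  rw [sum_mul_weight_eq hwd, ← add_assoc, ← add_mul] at h
  obtain ⟨hQ, hr⟩ := eq_socle_of_weight_eq hwd hw hlt (fun i => Nat.mod_lt _ (ha i)) h
  have hc' : ∀ i, c i < a i := fun i => by
    by_contra! hge
    have hci := hc i
    have hri := hr i
    rw [Nat.mod_eq_sub_mod hge, Nat.mod_eq_of_lt (by omega)] at hri
    omega
  rw [yDegree_eq_zero_of_lt hc'] at hQ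
  omega

lemma mk_stdMonomial_mem_iSup_ne (hwd : ∀ i, w i * a i = d) (hw : ∀ i, 0 < w i)
    (ha : ∀ i, 0 < a i) {s : ℕ} (hs : s + 2 ≤ 2 * k) {c : Fin (m + 1) → ℕ}
    (hc : ∀ i, c i + 2 ≤ 2 * a i) :
    Ideal.Quotient.mk (ideal k a) (stdMonomial a s c) ∈
      ⨆ (q : ℕ) (_ : q ≠ m * d + 2 * k * d - ∑ i, w i),
        Submodule.map (Ideal.Quotient.mkₐ ℚ (ideal k a)).toLinearMap
          (weightedHomogeneousSubmodule ℚ w q) := by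
  by_cases h : s * d + ∑ i, c i * w i = m * d + 2 * k * d - ∑ i, w i
  · rw [mk_stdMonomial_eq_zero_of_weight hwd hw ha hs hc h]
    exact Submodule.zero_mem _
  · exact Submodule.mem_iSup_of_mem _ <| Submodule.mem_iSup_of_mem h
      ⟨_, isWeightedHomogeneous_stdMonomial hwd s c, rfl⟩

end TopDegree

end WeightedCI

open WeightedCI in
theorem stmt_11_general (n k d : ℕ)
    (a w : Fin n → ℕ) (ha : ∀ i, 2 ≤ a i)
    (hw : ∀ i, 0 < w i) (hwd : ∀ i, w i * a i = d)
    (lst : Fin n) (hlst : (lst : ℕ) = n - 1)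
    (f : Fin n → MvPolynomial (Fin n) ℚ)
    (hf : ∀ i : Fin n, f i =
      if h : (i : ℕ) + 1 < n then
        X i ^ a i - X (⟨(i : ℕ) + 1, h⟩ : Fin n) ^ a (⟨(i : ℕ) + 1, h⟩ : Fin n)
      else
        X i ^ (2 * k * a i))
    (N : Submodule ℚ (MvPolynomial (Fin n) ℚ ⧸ Ideal.span (Set.range f)))
    (hN : N = Submodule.span ℚ
      (Set.range fun p : Fin k × (∀ i : Fin n, Fin (a i)) =>
        Ideal.Quotient.mk (Ideal.span (Set.range f))
          (X lst ^ ((p.1 : ℕ) * a lst) * ∏ i : Fin n, X i ^ (p.2 i : ℕ)))) :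
    Module.finrank ℚ (MvPolynomial (Fin n) ℚ ⧸ Ideal.span (Set.range f))
      = 2 * Module.finrank ℚ N
    ∧ ∀ u ∈ N, ∀ v ∈ N,
        u * v ∈ ⨆ (q : ℕ) (_ : q ≠ (n - 1) * d + 2 * k * d - ∑ i : Fin n, w i),
          Submodule.map (Ideal.Quotient.mkₐ ℚ (Ideal.span (Set.range f))).toLinearMap
            (weightedHomogeneousSubmodule ℚ w q) := by
  obtain ⟨m, rfl⟩ : ∃ m, n = m + 1 := ⟨n - 1, by have := lst.pos; omega⟩
  obtain rfl : lst = Fin.last m := Fin.ext (by simpa using hlst)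
  obtain rfl : f = relation k a := funext hf
  replace hN : N = Submodule.span ℚ (Set.range (stdBasis k a k)) := hN
  have ha_pos : ∀ i, 0 < a i := fun i => by have := ha i; omega
  subst hN
  refine ⟨?_, fun u hu v hv => ?_⟩
  · rw [finrank_quotient ha_pos, finrank_span_stdBasis ha_pos (by omega), mul_assoc]
  · have huv := Submodule.mul_mem_mul hu hv
    rw [Submodule.span_mul_span] at huv
    refine Submodule.span_le.2 ?_ huv
    rintro _ ⟨_, ⟨p, rfl⟩, _, ⟨q, rfl⟩, rfl⟩
    dsimp only
    rw [stdBasis, stdBasis, ← map_mul, stdMonomial_mul, Nat.add_sub_cancel]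
    exact mk_stdMonomial_mem_iSup_ne hwd hw ha_pos (by omega) fun i => by
      simp only [Pi.add_apply]; omega

/-- With `A = ℚ[x₁,…,x_n]/(f₁,…,f_n)` identified with `B ⊗ F`
(`B = ℚ[y₀]/(y₀^{2k})`, `F = ⊗ᵢ ℚ[x_i]/(x_i^{a_i})`), and
`N = V ⊗ F` with `V = span{y₀^s : 0 ≤ s < k}` — i.e. `N` the span of the
classes of the monomials `x_n^{s·a_n}·x₁^{c₁}⋯x_n^{c_n}` with `s < k`,
`c_i < a_i` — one has `dim A = 2·dim N`, and `N·N = 0` under the Poincaré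
duality inner product: the product of any two elements of `N` has zero
component in the top degree `D = (n-1)d + 2kd - Σᵢ wᵢ` of `A`. -/
theorem stmt_11 (n k d : ℕ) (hn : 2 ≤ n) (hk : 1 ≤ k)
    (a w : Fin n → ℕ) (ha : ∀ i, 2 ≤ a i)
    (hw : ∀ i, 0 < w i) (hweven : ∀ i, Even (w i)) (hwd : ∀ i, w i * a i = d)
    (lst : Fin n) (hlst : (lst : ℕ) = n - 1)
    (f : Fin n → MvPolynomial (Fin n) ℚ)
    (hf : ∀ i : Fin n, f i =
      if h : (i : ℕ) + 1 < n then
        X i ^ a i - X (⟨(i : ℕ) + 1, h⟩ : Fin n) ^ a (⟨(i : ℕ) + 1, h⟩ : Fin n)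
      else
        X i ^ (2 * k * a i))
    (N : Submodule ℚ (MvPolynomial (Fin n) ℚ ⧸ Ideal.span (Set.range f)))
    (hN : N = Submodule.span ℚ
      (Set.range fun p : Fin k × (∀ i : Fin n, Fin (a i)) =>
        Ideal.Quotient.mk (Ideal.span (Set.range f))
          (X lst ^ ((p.1 : ℕ) * a lst) * ∏ i : Fin n, X i ^ (p.2 i : ℕ)))) :
    Module.finrank ℚ (MvPolynomial (Fin n) ℚ ⧸ Ideal.span (Set.range f))
      = 2 * Module.finrank ℚ N
    ∧ ∀ u ∈ N, ∀ v ∈ N,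
        u * v ∈ ⨆ (q : ℕ) (_ : q ≠ (n - 1) * d + 2 * k * d - ∑ i : Fin n, w i),
          Submodule.map (Ideal.Quotient.mkₐ ℚ (Ideal.span (Set.range f))).toLinearMap
            (weightedHomogeneousSubmodule ℚ w q) :=
  stmt_11_general n k d a w ha hw hwd lst hlst f hf N hN
end
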